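/- In a synchronized Bellman–Ford computation where in each super-round i every vertex v sends the set S'^{(i)}_G[k](v) (tuples of the k nearest sampled sources under i-hop-limited distance, with their distances, hop counts, and predecessors, under the fixed tie-breaking order) to all neighbors and then keeps the k best tuples received, the set computed by v at the end of super-round i equals S'^{(i+1)}_G[k](v). Consequently, after (√n·k) super-rounds every vertex knows its k nearest sampled sources under (√n·k)-limited distance. -/

import Mathlib

/-!
After round `i`, vertex `v` holds the canonical tuples `(x, d^{(i)}(v,x), h^{(i)}(v,x))` of the
`k` reachable sources that are smallest for the lexicographic key (distance, hops, rank), and this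
is proved by induction on `i`. Every candidate of round `i+1` is the tuple of a walk with at most
`i+1` hops, so it is no better than the canonical tuple of its source. Conversely, an optimal
`(i+1)`-hop walk to `x` is empty or an edge `vu` followed by an optimal `i`-hop walk from `u`;
adding the edge preserves the key order of `u`'s sources, so if `x` is among the `k` best for `v`
it was among the `k` best for `u`, and its canonical tuple is a candidate. Keeping the `k` best
candidates therefore yields exactly the canonical tuples of the `k` best sources.
-/

open scoped ENNReal

namespace Stmt10

variable {V : Type*}

/-- Endpoint of a walk starting at `u` with subsequent vertices given by the list. -/
def last : V → List V → V
  | u, [] => u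
  | _, x :: xs => last x xs

/-- Weight of a walk starting at `u` with subsequent vertices given by the list. -/
noncomputable def cost (w : V → V → ℝ≥0∞) : V → List V → ℝ≥0∞
  | _, [] => 0
  | u, x :: xs => w u x + cost w x xs

/-- `h`-hop-limited distance from `u` to `v` (non-edges have weight `⊤`). -/
noncomputable def hdist (w : V → V → ℝ≥0∞) (h : ℕ) (u v : V) : ℝ≥0∞ :=
  ⨅ p ∈ {p : List V | p.length ≤ h ∧ last u p = v}, cost w u p

/-- Shortest-path distance from `u` to `v`. -/
noncomputable def dist (w : V → V → ℝ≥0∞) (u v : V) : ℝ≥0∞ :=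
  ⨅ h : ℕ, hdist w h u v

/-- `S` is a set of (at most) `k` closest reachable vertices to `v` (excluding `v`),
with ties broken arbitrarily: members of `S` are reachable and distinct from `v`,
`|S| ≤ k`, every member is at least as close as every reachable non-member, and `S`
has exactly `k` elements unless it already contains all reachable vertices. -/
def IsKClosest [Fintype V] (w : V → V → ℝ≥0∞) (k : ℕ) (v : V) (S : Finset V) : Prop :=
  (∀ u ∈ S, u ≠ v ∧ dist w v u < ⊤) ∧ S.card ≤ k ∧
  (∀ y ∈ S, ∀ z, z ∉ S → z ≠ v → dist w v z < ⊤ → dist w v y ≤ dist w v z) ∧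
  (∀ z, z ∉ S → z ≠ v → dist w v z < ⊤ → S.card = k)

/-- Weight function of the union `G ∪ G^(k)` of the graph with the `k`-shortcut hopset:
hopset edges `(u,v)` (present when `u ∈ S v` or `v ∈ S u`) get weight `d_G(u,v)`. -/
noncomputable def unionW [Fintype V] [DecidableEq V] (w : V → V → ℝ≥0∞) (S : V → Finset V)
    (u v : V) : ℝ≥0∞ :=
  if u ∈ S v ∨ v ∈ S u then min (w u v) (dist w u v) else w u v


/-- Minimum number of hops of an `i`-hop-limited minimum-weight `u`–`v` path. -/
noncomputable def minHops (w : V → V → ℝ≥0∞) (i : ℕ) (u v : V) : ℕ :=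
  sInf {ℓ : ℕ | ∃ p : List V, p.length = ℓ ∧ ℓ ≤ i ∧ last u p = v ∧ cost w u p = hdist w i u v}

/-- Tie-breaking key of a tuple `(source, distance estimate, hop count)`:
smaller distance first, then fewer hops, then smaller identifier of the source. -/
def tkey (rank : V → ℕ) (t : V × ℝ≥0∞ × ℕ) : ℝ≥0∞ × ℕ × ℕ :=
  (t.2.1, t.2.2, rank t.1)

/-- Lexicographic comparison of tuple keys. -/
def tkeyLe (rank : V → ℕ) (s t : V × ℝ≥0∞ × ℕ) : Prop :=
  tkey rank s = tkey rank t ∨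
    Prod.Lex (· < ·) (Prod.Lex (· < ·) (· < ·)) (tkey rank s) (tkey rank t)

/-- `S` consists of the `k` best tuples of the candidate set `C`, keeping for each
source only the best tuple, under the order `(distance, hops, source id)`. -/
def IsKBest (k : ℕ) (rank : V → ℕ) (C S : Finset (V × ℝ≥0∞ × ℕ)) : Prop :=
  S ⊆ C ∧ S.card ≤ k ∧
  (∀ s ∈ S, ∀ t ∈ S, s.1 = t.1 → s = t) ∧
  (∀ s ∈ S, ∀ c ∈ C, c.1 = s.1 → tkeyLe rank s c) ∧
  (∀ s ∈ S, ∀ c ∈ C, (∀ t ∈ S, t.1 ≠ c.1) → tkeyLe rank s c) ∧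
  (S.card < k → ∀ c ∈ C, ∃ t ∈ S, t.1 = c.1)

open Classical in
/-- Candidate tuples of vertex `v` at the end of a super-round: its own current
tuples, together with every tuple received from a neighbor `u`, with the distance
increased by `ω(u,v)` and the hop count increased by one. -/
noncomputable def cand [Fintype V] (w : V → V → ℝ≥0∞)
    (Bi : V → Finset (V × ℝ≥0∞ × ℕ)) (v : V) : Finset (V × ℝ≥0∞ × ℕ) :=
  Bi v ∪ (Finset.univ.filter fun u => w u v < ⊤).biUnion
    (fun u => (Bi u).image fun t => (t.1, t.2.1 + w u v, t.2.2 + 1))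

/-- `S` is the set of the `k` nearest sampled sources to `v` with respect to
`i`-hop-limited distance in `G`, with ties broken first by the number of hops of the
corresponding minimum-weight `i`-limited path and then by source identifiers. -/
def KNearestSources [Fintype V] (w : V → V → ℝ≥0∞) (V' : Finset V) (k : ℕ)
    (rank : V → ℕ) (i : ℕ) (v : V) (S : Finset V) : Prop :=
  S ⊆ V' ∧ S.card ≤ k ∧ (∀ y ∈ S, hdist w i v y < ⊤) ∧
  (∀ y ∈ S, ∀ z ∈ V', z ∉ S → hdist w i v z < ⊤ →
    Prod.Lex (· < ·) (Prod.Lex (· < ·) (· < ·))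
      (hdist w i v y, minHops w i v y, rank y)
      (hdist w i v z, minHops w i v z, rank z)) ∧
  (∀ z ∈ V', hdist w i v z < ⊤ → z ∉ S → S.card = k)

noncomputable def canonTuple (w : V → V → ℝ≥0∞) (j : ℕ) (v x : V) : V × ℝ≥0∞ × ℕ :=
  (x, hdist w j v x, minHops w j v x)

noncomputable def pathTuple (w : V → V → ℝ≥0∞) (v : V) (p : List V) : V × ℝ≥0∞ × ℕ :=
  (last v p, cost w v p, p.length)

def relax (c : ℝ≥0∞) (t : V × ℝ≥0∞ × ℕ) : V × ℝ≥0∞ × ℕ :=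
  (t.1, t.2.1 + c, t.2.2 + 1)

def tupleKey (rank : V → ℕ) (t : V × ℝ≥0∞ × ℕ) : ℝ≥0∞ ×ₗ ℕ ×ₗ ℕ :=
  toLex (t.2.1, toLex (t.2.2, rank t.1))

section Paths

variable {w : V → V → ℝ≥0∞} {j : ℕ} {v x : V}

lemma hdist_le_cost {p : List V} (hp : p.length ≤ j) : hdist w j v (last v p) ≤ cost w v p :=
  iInf₂_le p ⟨hp, rfl⟩

lemma exists_cost_eq_hdist [Finite V] (h : hdist w j v x < ⊤) :
    ∃ p : List V, p.length ≤ j ∧ last v p = x ∧ cost w v p = hdist w j v x := by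
  set S : Set (List V) := {p | p.length ≤ j ∧ last v p = x}
  have hS : S.Finite := (List.finite_length_le V j).subset fun p hp => hp.1
  have hinf : hdist w j v x = sInf (cost w v '' S) := by rw [sInf_image]; rfl
  have hne : (cost w v '' S).Nonempty := by
    by_contra hempty
    rw [Set.not_nonempty_iff_eq_empty] at hempty
    simp [hinf, hempty] at h
  obtain ⟨p, hp, hcost⟩ := hinf ▸ hne.csInf_mem (hS.image _)
  exact ⟨p, hp.1, hp.2, hcost⟩

lemma minHops_le_length {p : List V} (hp : p.length ≤ j)
    (hcost : cost w v p = hdist w j v (last v p)) : minHops w j v (last v p) ≤ p.length :=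
  Nat.sInf_le ⟨p, rfl, hp, rfl, hcost⟩

lemma exists_pathTuple_eq_canonTuple [Finite V] (h : hdist w j v x < ⊤) :
    ∃ p : List V, p.length ≤ j ∧ pathTuple w v p = canonTuple w j v x := by
  obtain ⟨p, hp, hlast, hcost⟩ := exists_cost_eq_hdist h
  obtain ⟨q, hlen, hq, hqlast, hqcost⟩ :=
    Nat.sInf_mem (s := {ℓ | ∃ p : List V, p.length = ℓ ∧ ℓ ≤ j ∧ last v p = x ∧
      cost w v p = hdist w j v x}) ⟨_, p, rfl, hp, hlast, hcost⟩
  exact ⟨q, hlen ▸ hq, by simp only [pathTuple, canonTuple, minHops, hqlast, hqcost, hlen]⟩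

@[simp] lemma hdist_self (w : V → V → ℝ≥0∞) (j : ℕ) (v : V) : hdist w j v v = 0 :=
  nonpos_iff_eq_zero.1 (hdist_le_cost (p := []) (by simp))

@[simp] lemma minHops_self (w : V → V → ℝ≥0∞) (j : ℕ) (v : V) : minHops w j v v = 0 :=
  Nat.le_zero.1 (minHops_le_length (p := []) (by simp) (hdist_self w j v).symm)

lemma hdist_zero_of_ne (h : x ≠ v) : hdist w 0 v x = ⊤ := by
  simp only [hdist, Set.mem_ofPred_eq, nonpos_iff_eq_zero, List.length_eq_zero_iff, iInf_eq_top]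
  rintro _ ⟨rfl, rfl⟩
  exact absurd rfl h

end Paths

section Keys

variable {rank : V → ℕ}

lemma tkeyLe_iff_tupleKey_le {s t : V × ℝ≥0∞ × ℕ} :
    tkeyLe rank s t ↔ tupleKey rank s ≤ tupleKey rank t := by
  have hkey_eq : tkey rank s = tkey rank t ↔ tupleKey rank s = tupleKey rank t := by
    simp [tkey, tupleKey, Prod.ext_iff]
  rw [le_iff_eq_or_lt, ← hkey_eq]
  rfl

lemma tupleKey_injective (hrank : Function.Injective rank) :
    Function.Injective (tupleKey rank : V × ℝ≥0∞ × ℕ → _) := by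
  intro s t h
  simp only [tupleKey, toLex_inj, Prod.ext_iff] at h
  exact Prod.ext (hrank h.2.2) (Prod.ext h.1 h.2.1)

lemma eq_of_tupleKey_eq_of_fst_eq {s t : V × ℝ≥0∞ × ℕ} (hkey : tupleKey rank s = tupleKey rank t)
    (hfst : s.1 = t.1) : s = t := by
  simp only [tupleKey, toLex_inj, Prod.ext_iff] at hkey
  exact Prod.ext hfst (Prod.ext hkey.1 hkey.2.1)

lemma le_of_tupleKey_le {s t : V × ℝ≥0∞ × ℕ} (h : tupleKey rank s ≤ tupleKey rank t) :
    s.2.1 ≤ t.2.1 :=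
  Prod.Lex.monotone_fst (tupleKey rank s) (tupleKey rank t) h

lemma tupleKey_relax_lt_relax_iff {c : ℝ≥0∞} (hc : c ≠ ⊤) {s t : V × ℝ≥0∞ × ℕ} :
    tupleKey rank (relax c s) < tupleKey rank (relax c t) ↔ tupleKey rank s < tupleKey rank t := by
  simp only [tupleKey, relax, Prod.Lex.toLex_lt_toLex, ENNReal.add_lt_add_iff_right hc,
    ENNReal.add_left_inj hc, add_lt_add_iff_right, add_left_inj]

lemma tupleKey_relax_le_relax_iff {c : ℝ≥0∞} (hc : c ≠ ⊤) {s t : V × ℝ≥0∞ × ℕ} :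
    tupleKey rank (relax c s) ≤ tupleKey rank (relax c t) ↔ tupleKey rank s ≤ tupleKey rank t := by
  rw [← not_lt, ← not_lt, tupleKey_relax_lt_relax_iff hc]

lemma tupleKey_canonTuple_le_pathTuple {w : V → V → ℝ≥0∞} {j : ℕ} {v : V} {p : List V}
    (hp : p.length ≤ j) :
    tupleKey rank (canonTuple w j v (last v p)) ≤ tupleKey rank (pathTuple w v p) := by
  simp only [tupleKey, canonTuple, pathTuple, Prod.Lex.toLex_le_toLex, le_refl, and_true]
  rcases (hdist_le_cost hp).lt_or_eq with hlt | heq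
  · exact Or.inl hlt
  · exact Or.inr ⟨heq, (minHops_le_length hp heq.symm).lt_or_eq⟩

end Keys

section BottomK

variable {α : Type*} [LinearOrder α]

def bottomK (κ : V → α) (F : Finset V) (k : ℕ) : Finset V :=
  F.filter fun x => (F.filter fun y => κ y < κ x).card < k

variable {κ κ' : V → α} {F F' : Finset V} {k : ℕ} {x z : V}

lemma mem_bottomK : x ∈ bottomK κ F k ↔ x ∈ F ∧ (F.filter fun y => κ y < κ x).card < k :=
  Finset.mem_filter

lemma bottomK_subset : bottomK κ F k ⊆ F :=
  Finset.filter_subset _ _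

lemma lt_of_mem_bottomK_of_notMem (hx : x ∈ bottomK κ F k) (hz : z ∈ F)
    (hzN : z ∉ bottomK κ F k) : κ x < κ z := by
  by_contra! hle
  refine hzN (mem_bottomK.2 ⟨hz, lt_of_le_of_lt (Finset.card_le_card ?_) (mem_bottomK.1 hx).2⟩)
  intro y hy
  simp only [Finset.mem_filter] at hy ⊢
  exact ⟨hy.1, hy.2.trans_le hle⟩

lemma card_bottomK_le (hκ : Set.InjOn κ F) : (bottomK κ F k).card ≤ k := by
  classical
  by_contra! hgt
  obtain ⟨x, hx, hmax⟩ := Finset.exists_max_image (bottomK κ F k) κ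
    (Finset.card_pos.1 (k.zero_le.trans_lt hgt))
  have hbelow : (bottomK κ F k).erase x ⊆ F.filter fun y => κ y < κ x := by
    intro y hy
    obtain ⟨hyx, hy⟩ := Finset.mem_erase.1 hy
    refine Finset.mem_filter.2 ⟨bottomK_subset hy, (hmax y hy).lt_of_ne fun h => hyx ?_⟩
    exact hκ (bottomK_subset hy) (bottomK_subset hx) h
  have := Finset.card_le_card hbelow
  rw [Finset.card_erase_of_mem hx] at this
  have := (mem_bottomK.1 hx).2
  omega

lemma card_bottomK_eq_of_notMem (hκ : Set.InjOn κ F) (hz : z ∈ F)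
    (hzN : z ∉ bottomK κ F k) : (bottomK κ F k).card = k := by
  classical
  refine (card_bottomK_le hκ).antisymm ?_
  obtain ⟨m, hm, hmin⟩ := Finset.exists_min_image (F \ bottomK κ F k) κ
    ⟨z, Finset.mem_sdiff.2 ⟨hz, hzN⟩⟩
  obtain ⟨hmF, hmN⟩ := Finset.mem_sdiff.1 hm
  have hbelow : (F.filter fun y => κ y < κ m) ⊆ bottomK κ F k := by
    intro y hy
    obtain ⟨hyF, hym⟩ := Finset.mem_filter.1 hy
    by_contra hyN
    exact (hmin y (Finset.mem_sdiff.2 ⟨hyF, hyN⟩)).not_gt hym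
  have hk : k ≤ (F.filter fun y => κ y < κ m).card := by
    by_contra! hlt
    exact hmN (mem_bottomK.2 ⟨hmF, hlt⟩)
  exact hk.trans (Finset.card_le_card hbelow)

lemma mem_bottomK_of_forall_lt (hx : x ∈ bottomK κ' F' k) (hxF : x ∈ F)
    (hlt : ∀ y ∈ F, κ y < κ x → y ∈ F' ∧ κ' y < κ' x) : x ∈ bottomK κ F k := by
  refine mem_bottomK.2 ⟨hxF, lt_of_le_of_lt (Finset.card_le_card ?_) (mem_bottomK.1 hx).2⟩
  intro y hy
  obtain ⟨hyF, hyx⟩ := Finset.mem_filter.1 hy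
  exact Finset.mem_filter.2 (hlt y hyF hyx)

end BottomK

section Selection

variable {k : ℕ} {rank : V → ℕ} {C T : Finset (V × ℝ≥0∞ × ℕ)} {F : Finset V}
  {g : V → V × ℝ≥0∞ × ℕ}

lemma injOn_tupleKey_comp (hrank : Function.Injective rank) (hg : ∀ x, (g x).1 = x) :
    Set.InjOn (fun x => tupleKey rank (g x)) F := fun x _ y _ h => by
  rw [← hg x, tupleKey_injective hrank h, hg]

lemma IsKBest.mem_bottomK_and_eq (hrank : Function.Injective rank)
    (hT : IsKBest k rank C T) (hg : ∀ x, (g x).1 = x)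
    (hlow : ∀ c ∈ C, c.1 ∈ F ∧ tupleKey rank (g c.1) ≤ tupleKey rank c)
    (hatt : ∀ x ∈ bottomK (fun x => tupleKey rank (g x)) F k, g x ∈ C)
    {s : V × ℝ≥0∞ × ℕ} (hs : s ∈ T) :
    s.1 ∈ bottomK (fun x => tupleKey rank (g x)) F k ∧ s = g s.1 := by
  classical
  set N := bottomK (fun x => tupleKey rank (g x)) F k
  obtain ⟨hTC, hTcard, -, hTsame, hTother, -⟩ := hT
  obtain ⟨hsF, hs_low⟩ := hlow s (hTC hs)
  have hsN : s.1 ∈ N := by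
    by_contra hsN
    have hNcard : N.card = k := card_bottomK_eq_of_notMem (injOn_tupleKey_comp hrank hg) hsF hsN
    obtain ⟨y, hyN, hyT⟩ : ∃ y ∈ N, ∀ t ∈ T, t.1 ≠ (g y).1 := by
      by_contra! hall
      have hsub : insert s.1 N ⊆ T.image Prod.fst := by
        refine Finset.insert_subset (Finset.mem_image_of_mem _ hs) fun y hy => ?_
        obtain ⟨t, ht, hty⟩ := hall y hy
        exact Finset.mem_image.2 ⟨t, ht, hty.trans (hg y)⟩
      have := (Finset.card_le_card hsub).trans Finset.card_image_le
      rw [Finset.card_insert_of_notMem hsN] at this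
      omega
    have hsy := tkeyLe_iff_tupleKey_le.1 (hTother s hs (g y) (hatt y hyN) hyT)
    exact (lt_of_mem_bottomK_of_notMem hyN hsF hsN).not_ge (hs_low.trans hsy)
  have hle := tkeyLe_iff_tupleKey_le.1 (hTsame s hs (g s.1) (hatt _ hsN) (hg _))
  exact ⟨hsN, tupleKey_injective hrank (hle.antisymm hs_low)⟩

lemma IsKBest.eq_image_bottomK [DecidableEq V] (hrank : Function.Injective rank)
    (hT : IsKBest k rank C T) (hg : ∀ x, (g x).1 = x)
    (hlow : ∀ c ∈ C, c.1 ∈ F ∧ tupleKey rank (g c.1) ≤ tupleKey rank c)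
    (hatt : ∀ x ∈ bottomK (fun x => tupleKey rank (g x)) F k, g x ∈ C) :
    T = (bottomK (fun x => tupleKey rank (g x)) F k).image g := by
  set N := bottomK (fun x => tupleKey rank (g x)) F k
  have hcanon := fun s (hs : s ∈ T) => hT.mem_bottomK_and_eq hrank hg hlow hatt hs
  have himage_sub : T.image Prod.fst ⊆ N := by
    intro x hx
    obtain ⟨s, hs, rfl⟩ := Finset.mem_image.1 hx
    exact (hcanon s hs).1
  have himage : T.image Prod.fst = N := by
    refine Finset.eq_of_subset_of_card_le himage_sub ?_
    obtain ⟨-, hTcard, hTinj, -, -, hTfull⟩ := hT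
    rcases hTcard.lt_or_eq with hlt | heq
    · refine Finset.card_le_card fun x hx => ?_
      obtain ⟨t, ht, htx⟩ := hTfull hlt (g x) (hatt x hx)
      exact Finset.mem_image.2 ⟨t, ht, htx.trans (hg x)⟩
    · rw [Finset.card_image_of_injOn hTinj, heq]
      exact card_bottomK_le (injOn_tupleKey_comp hrank hg)
  ext s
  refine ⟨fun hs => Finset.mem_image.2 ⟨s.1, (hcanon s hs).1, (hcanon s hs).2.symm⟩, ?_⟩
  intro hs
  obtain ⟨x, hx, rfl⟩ := Finset.mem_image.1 hs
  obtain ⟨t, ht, rfl⟩ := Finset.mem_image.1 (himage ▸ hx)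
  exact (hcanon t ht).2 ▸ ht

end Selection

section BellmanFord

variable {w : V → V → ℝ≥0∞} {V' : Finset V} {k : ℕ} {rank : V → ℕ} {i j : ℕ} {u v x : V}

noncomputable def reachableSources (w : V → V → ℝ≥0∞) (V' : Finset V) (j : ℕ) (v : V) :
    Finset V :=
  V'.filter fun x => hdist w j v x < ⊤

noncomputable def nearestSources (w : V → V → ℝ≥0∞) (V' : Finset V) (k : ℕ) (rank : V → ℕ)
    (j : ℕ) (v : V) : Finset V :=
  bottomK (fun x => tupleKey rank (canonTuple w j v x)) (reachableSources w V' j v) k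

lemma mem_reachableSources : x ∈ reachableSources w V' j v ↔ x ∈ V' ∧ hdist w j v x < ⊤ :=
  Finset.mem_filter

lemma mem_reachableSources_of_mem_nearestSources (hx : x ∈ nearestSources w V' k rank j v) :
    x ∈ V' ∧ hdist w j v x < ⊤ :=
  mem_reachableSources.1 (bottomK_subset hx)

lemma knearestSources_nearestSources [Fintype V] (hrank : Function.Injective rank) :
    KNearestSources w V' k rank j v (nearestSources w V' k rank j v) := by
  have hinj := injOn_tupleKey_comp hrank (g := canonTuple w j v) (F := reachableSources w V' j v)
    fun _ => rfl
  refine ⟨fun y hy => (mem_reachableSources_of_mem_nearestSources hy).1, card_bottomK_le hinj,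
    fun y hy => (mem_reachableSources_of_mem_nearestSources hy).2, ?_, ?_⟩
  · intro y hy z hz hzN hfin
    exact lt_of_mem_bottomK_of_notMem hy (mem_reachableSources.2 ⟨hz, hfin⟩) hzN
  · intro z hz hfin hzN
    exact card_bottomK_eq_of_notMem hinj (mem_reachableSources.2 ⟨hz, hfin⟩) hzN

lemma mem_cand [Fintype V] {Bi : V → Finset (V × ℝ≥0∞ × ℕ)} {c : V × ℝ≥0∞ × ℕ} :
    c ∈ cand w Bi v ↔ c ∈ Bi v ∨ ∃ u, w u v < ⊤ ∧ ∃ t ∈ Bi u, relax (w u v) t = c := by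
  simp [cand, relax]

lemma pathTuple_cons (w : V → V → ℝ≥0∞) (v u : V) (q : List V) :
    pathTuple w v (u :: q) = relax (w v u) (pathTuple w u q) := by
  simp [pathTuple, relax, cost, last, add_comm]

lemma tupleKey_canonTuple_succ_le_canonTuple [Finite V] (h : hdist w i v x < ⊤) :
    tupleKey rank (canonTuple w (i + 1) v x) ≤ tupleKey rank (canonTuple w i v x) := by
  obtain ⟨p, hp, hpx⟩ := exists_pathTuple_eq_canonTuple h
  have hlast : last v p = x := congrArg Prod.fst hpx
  rw [← hpx, ← hlast]
  exact tupleKey_canonTuple_le_pathTuple (hp.trans i.le_succ)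

lemma tupleKey_canonTuple_succ_le_relax [Finite V] (h : hdist w i u x < ⊤) :
    tupleKey rank (canonTuple w (i + 1) v x) ≤
      tupleKey rank (relax (w v u) (canonTuple w i u x)) := by
  obtain ⟨q, hq, hqx⟩ := exists_pathTuple_eq_canonTuple h
  have hlast : last u q = x := congrArg Prod.fst hqx
  rw [← hqx, ← pathTuple_cons, ← hlast]
  exact tupleKey_canonTuple_le_pathTuple (p := u :: q) (Nat.succ_le_succ hq)

lemma canonTuple_succ_eq_canonTuple_or_relax [Finite V] (h : hdist w (i + 1) v x < ⊤) :
    (hdist w i v x < ⊤ ∧ canonTuple w (i + 1) v x = canonTuple w i v x) ∨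
      ∃ u, w v u < ⊤ ∧ hdist w i u x < ⊤ ∧
        canonTuple w (i + 1) v x = relax (w v u) (canonTuple w i u x) := by
  obtain ⟨_ | ⟨u, q⟩, hp, hpx⟩ := exists_pathTuple_eq_canonTuple h
  · obtain rfl : v = x := congrArg Prod.fst hpx
    simp [canonTuple]
  have hlast : last u q = x := congrArg Prod.fst hpx
  have hq : q.length ≤ i := Nat.succ_le_succ_iff.1 hp
  have hcost : w v u + cost w u q < ⊤ := (congrArg (·.2.1) hpx).trans_lt h
  obtain ⟨hw, hcq⟩ := ENNReal.add_lt_top.1 hcost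
  have hfin : hdist w i u x < ⊤ := (hlast ▸ hdist_le_cost hq).trans_lt hcq
  -- Both tuples have source `x`, so any ranking compares them by distance and hops only.
  have hle :
      tupleKey (fun _ => 0) (canonTuple w i u x) ≤ tupleKey (fun _ => 0) (pathTuple w u q) :=
    hlast ▸ tupleKey_canonTuple_le_pathTuple hq
  have hge :
      tupleKey (fun _ => 0) (pathTuple w u q) ≤ tupleKey (fun _ => 0) (canonTuple w i u x) := by
    rw [← tupleKey_relax_le_relax_iff hw.ne, ← pathTuple_cons, hpx]
    exact tupleKey_canonTuple_succ_le_relax hfin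
  have hopt : canonTuple w i u x = pathTuple w u q :=
    eq_of_tupleKey_eq_of_fst_eq (hle.antisymm hge) hlast.symm
  exact Or.inr ⟨u, hw, hfin, by rw [← hpx, pathTuple_cons, hopt]⟩

lemma image_canonTuple_nearestSources_zero [DecidableEq V] (hk : 1 ≤ k) :
    (nearestSources w V' k rank 0 v).image (canonTuple w 0 v) =
      if v ∈ V' then {(v, 0, 0)} else ∅ := by
  have hreach : reachableSources w V' 0 v = V'.filter (· = v) := by
    refine Finset.filter_congr fun x _ => ⟨fun hfin => ?_, fun hxv => by simp [hxv]⟩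
    by_contra hxv
    exact (hdist_zero_of_ne hxv ▸ hfin).false
  have hnear : nearestSources w V' k rank 0 v = V'.filter (· = v) := by
    rw [nearestSources, hreach]
    refine Finset.filter_true_of_mem fun x hx => ?_
    obtain rfl := (Finset.mem_filter.1 hx).2
    rw [Finset.filter_eq_empty_iff.2 fun y hy hlt => ?_, Finset.card_empty]
    · exact hk
    obtain rfl := (Finset.mem_filter.1 hy).2
    exact lt_irrefl _ hlt
  rw [hnear, Finset.filter_eq']
  split_ifs <;> simp [canonTuple]

end BellmanFord

section Round

variable [Fintype V] [DecidableEq V] {w : V → V → ℝ≥0∞} {V' : Finset V} {k : ℕ} {rank : V → ℕ}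
  {i : ℕ} {v : V} {Bi : V → Finset (V × ℝ≥0∞ × ℕ)}

lemma mem_reachableSources_and_tupleKey_le_of_mem_cand (hsymm : ∀ u v, w u v = w v u)
    (hB : ∀ u, Bi u = (nearestSources w V' k rank i u).image (canonTuple w i u))
    {c : V × ℝ≥0∞ × ℕ} (hc : c ∈ cand w Bi v) :
    c.1 ∈ reachableSources w V' (i + 1) v ∧
      tupleKey rank (canonTuple w (i + 1) v c.1) ≤ tupleKey rank c := by
  rcases mem_cand.1 hc with hc | ⟨u, hw, t, ht, rfl⟩
  · obtain ⟨x, hx, rfl⟩ := Finset.mem_image.1 (hB v ▸ hc)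
    obtain ⟨hxV, hfin⟩ := mem_reachableSources_of_mem_nearestSources hx
    have hkey := tupleKey_canonTuple_succ_le_canonTuple (rank := rank) hfin
    exact ⟨mem_reachableSources.2 ⟨hxV, (le_of_tupleKey_le hkey).trans_lt hfin⟩, hkey⟩
  · obtain ⟨x, hx, rfl⟩ := Finset.mem_image.1 (hB u ▸ ht)
    obtain ⟨hxV, hfin⟩ := mem_reachableSources_of_mem_nearestSources hx
    have hkey := tupleKey_canonTuple_succ_le_relax (rank := rank) (v := v) hfin
    rw [← hsymm] at hkey
    exact ⟨mem_reachableSources.2 ⟨hxV, (le_of_tupleKey_le hkey).trans_lt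
      (ENNReal.add_lt_top.2 ⟨hfin, hw⟩)⟩, hkey⟩

lemma canonTuple_succ_mem_cand (hsymm : ∀ u v, w u v = w v u)
    (hB : ∀ u, Bi u = (nearestSources w V' k rank i u).image (canonTuple w i u))
    {x : V} (hx : x ∈ nearestSources w V' k rank (i + 1) v) :
    canonTuple w (i + 1) v x ∈ cand w Bi v := by
  obtain ⟨hxV, hfin⟩ := mem_reachableSources_of_mem_nearestSources hx
  rcases canonTuple_succ_eq_canonTuple_or_relax hfin with ⟨hfin_v, heq⟩ | ⟨u, hw, hfin_u, heq⟩
  · have hx_v : x ∈ nearestSources w V' k rank i v := by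
      refine mem_bottomK_of_forall_lt hx (mem_reachableSources.2 ⟨hxV, hfin_v⟩) fun y hy hlt => ?_
      obtain ⟨hyV, hyfin⟩ := mem_reachableSources.1 hy
      have hkey := tupleKey_canonTuple_succ_le_canonTuple (rank := rank) hyfin
      refine ⟨mem_reachableSources.2 ⟨hyV, (le_of_tupleKey_le hkey).trans_lt hyfin⟩, ?_⟩
      exact heq ▸ hkey.trans_lt hlt
    rw [heq]
    exact mem_cand.2 (Or.inl (hB v ▸ Finset.mem_image_of_mem _ hx_v))
  · have hx_u : x ∈ nearestSources w V' k rank i u := by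
      refine mem_bottomK_of_forall_lt hx (mem_reachableSources.2 ⟨hxV, hfin_u⟩) fun y hy hlt => ?_
      obtain ⟨hyV, hyfin⟩ := mem_reachableSources.1 hy
      have hkey := tupleKey_canonTuple_succ_le_relax (rank := rank) (v := v) hyfin
      refine ⟨mem_reachableSources.2 ⟨hyV, (le_of_tupleKey_le hkey).trans_lt
        (ENNReal.add_lt_top.2 ⟨hyfin, hw⟩)⟩, ?_⟩
      exact heq ▸ hkey.trans_lt ((tupleKey_relax_lt_relax_iff hw.ne).2 hlt)
    rw [heq, ← hsymm]
    exact mem_cand.2 (Or.inr ⟨u, hsymm u v ▸ hw, _, hB u ▸ Finset.mem_image_of_mem _ hx_u, rfl⟩)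

lemma IsKBest.eq_image_canonTuple_nearestSources (hsymm : ∀ u v, w u v = w v u)
    (hrank : Function.Injective rank)
    (hB : ∀ u, Bi u = (nearestSources w V' k rank i u).image (canonTuple w i u))
    {T : Finset (V × ℝ≥0∞ × ℕ)} (hT : IsKBest k rank (cand w Bi v) T) :
    T = (nearestSources w V' k rank (i + 1) v).image (canonTuple w (i + 1) v) :=
  hT.eq_image_bottomK hrank (fun _ => rfl)
    (fun _ hc => mem_reachableSources_and_tupleKey_le_of_mem_cand hsymm hB hc)
    (fun _ hx => canonTuple_succ_mem_cand hsymm hB hx)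

end Round

theorem truncated_bellman_ford_correct_general [Fintype V] [DecidableEq V]
    (w : V → V → ℝ≥0∞) (hsymm : ∀ u v, w u v = w v u)
    (n : ℕ)
    (V' : Finset V) (k : ℕ) (hk : 1 ≤ k)
    (rank : V → ℕ) (hrank : Function.Injective rank)
    (B : ℕ → V → Finset (V × ℝ≥0∞ × ℕ))
    (hB0 : ∀ v, B 0 v = if v ∈ V' then {(v, 0, 0)} else ∅)
    (hBstep : ∀ i v, IsKBest k rank (cand w (B i) v) (B (i + 1) v)) :
    (∀ i v, (∀ t ∈ B i v, t.1 ∈ V' ∧ t.2.1 = hdist w i v t.1 ∧ t.2.2 = minHops w i v t.1) ∧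
      KNearestSources w V' k rank i v ((B i v).image Prod.fst)) ∧
    (∀ v, KNearestSources w V' k rank (Nat.sqrt n * k) v
      ((B (Nat.sqrt n * k) v).image Prod.fst)) := by
  have hB : ∀ i v, B i v = (nearestSources w V' k rank i v).image (canonTuple w i v) := by
    intro i
    induction i with
    | zero => exact fun v => by rw [hB0, image_canonTuple_nearestSources_zero hk]
    | succ i ih => exact fun v => (hBstep i v).eq_image_canonTuple_nearestSources hsymm hrank ih
  have hcorrect : ∀ i v,
      (∀ t ∈ B i v, t.1 ∈ V' ∧ t.2.1 = hdist w i v t.1 ∧ t.2.2 = minHops w i v t.1) ∧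
        KNearestSources w V' k rank i v ((B i v).image Prod.fst) := by
    intro i v
    have hsources : (B i v).image Prod.fst = nearestSources w V' k rank i v := by
      rw [hB, Finset.image_image]
      exact Finset.image_id'
    refine ⟨fun t ht => ?_, hsources ▸ knearestSources_nearestSources hrank⟩
    obtain ⟨x, hx, rfl⟩ := Finset.mem_image.1 (hB i v ▸ ht)
    exact ⟨(mem_reachableSources_of_mem_nearestSources hx).1, rfl, rfl⟩
  exact ⟨hcorrect, fun v => (hcorrect _ v).2⟩

/-- Correctness of the truncated-to-`k` Bellman–Ford: if every vertex starts with its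
own tuple (when it is a sampled source) and in each super-round keeps the `k` best
tuples among its own and those received from its neighbors, then after super-round
`i` every vertex holds exactly the tuples of its `k` nearest sampled sources under
`(i)`-hop-limited distance, with correct distances and hop counts; in particular,
after `√n·k` super-rounds every vertex knows its `k` nearest sampled sources under
`(√n·k)`-limited distance. -/
theorem truncated_bellman_ford_correct [Fintype V] [DecidableEq V]
    (w : V → V → ℝ≥0∞) (hsymm : ∀ u v, w u v = w v u)
    (n : ℕ) (hn : n = Fintype.card V)
    (V' : Finset V) (k : ℕ) (hk : 1 ≤ k)
    (rank : V → ℕ) (hrank : Function.Injective rank)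
    (B : ℕ → V → Finset (V × ℝ≥0∞ × ℕ))
    (hB0 : ∀ v, B 0 v = if v ∈ V' then {(v, 0, 0)} else ∅)
    (hBstep : ∀ i v, IsKBest k rank (cand w (B i) v) (B (i + 1) v)) :
    (∀ i v, (∀ t ∈ B i v, t.1 ∈ V' ∧ t.2.1 = hdist w i v t.1 ∧ t.2.2 = minHops w i v t.1) ∧
      KNearestSources w V' k rank i v ((B i v).image Prod.fst)) ∧
    (∀ v, KNearestSources w V' k rank (Nat.sqrt n * k) v
      ((B (Nat.sqrt n * k) v).image Prod.fst)) :=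
  truncated_bellman_ford_correct_general w hsymm n V' k hk rank hrank B hB0 hBstep

end Stmt10
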